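/- arXiv:2107.00707 — 9 statements merged into one kernel-verified Lean document; each statement's English description precedes it below -/
import Mathlib

section
/- Fix T > 0, let ξ, y, a : [0,T] → ℝ with a nondecreasing, and fix t ∈ [0,T). Assume: the right limits y(t+) = lim_{u↓t} y(u) and a(t+) = lim_{u↓t} a(u) exist; y(t+) − y(t) = −(a(t+) − a(t)); y(s) ≥ ξ(s) for all s ∈ [0,T]; and the Skorokhod condition (y(t) − ξ(t))·(a(t+) − a(t)) = 0 holds. Then y(t) = max(ξ(t), y(t+)). -/
/- STATEMENT 3 (pathwise content of Proposition 2.1, first assertion):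
if y(t+) − y(t) = −(a(t+) − a(t)), y ≥ ξ on [0,T], and the right-jump Skorokhod
condition (y(t) − ξ(t))·(a(t+) − a(t)) = 0 holds, then y(t) = max(ξ(t), y(t+)). -/

open Filter Set

theorem rbsde_path_right_jump
    (T : ℝ) (hT : 0 < T) (ξ y a : ℝ → ℝ)
    (ha_mono : MonotoneOn a (Set.Icc 0 T))
    (t : ℝ) (ht : t ∈ Set.Ico (0 : ℝ) T)
    (yp ap : ℝ)
    (hy_lim : Tendsto y (nhdsWithin t (Set.Ioo t T)) (nhds yp))
    (ha_lim : Tendsto a (nhdsWithin t (Set.Ioo t T)) (nhds ap))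
    (hjump : yp - y t = -(ap - a t))
    (hdom : ∀ s ∈ Set.Icc (0 : ℝ) T, ξ s ≤ y s)
    (hskorokhod : (y t - ξ t) * (ap - a t) = 0) :
    y t = max (ξ t) yp := by
  obtain ⟨ht0, htT⟩ := ht
  haveI : (nhdsWithin t (Set.Ioo t T)).NeBot :=
    left_nhdsWithin_Ioo_neBot htT
  have hat_le : a t ≤ ap := by
    refine ge_of_tendsto ha_lim (eventually_nhdsWithin_of_forall fun u hu' => ?_)
    exact ha_mono ⟨ht0, le_of_lt htT⟩ ⟨le_trans ht0 (le_of_lt hu'.1), le_of_lt hu'.2⟩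
      (le_of_lt hu'.1)
  have hξt : ξ t ≤ y t := hdom t ⟨ht0, le_of_lt htT⟩
  rcases mul_eq_zero.mp hskorokhod with h | h
  · -- y t = ξ t
    have hyξ : y t = ξ t := by linarith
    have hyp : yp ≤ ξ t := by linarith
    rw [hyξ, max_eq_left hyp]
  · -- ap = a t, so yp = y t
    have : yp = y t := by linarith
    rw [this, max_eq_right hξt]
end

section
/- Fix T > 0, let ξ, y, a : [0,T] → ℝ with a nondecreasing, and fix t ∈ (0,T]. Assume: the left limits y(t−) = lim_{u↑t} y(u) and a(t−) = lim_{u↑t} a(u) exist; y(t) − y(t−) = −(a(t) − a(t−)); y(u) ≥ ξ(u) for all u ∈ [0,t); and the Skorokhod condition (y(t−) − limsup_{u↑t} ξ(u))·(a(t) − a(t−)) = 0 holds. Then y(t−) = max(limsup_{u↑t} ξ(u), y(t)), where the limsup and the maximum are taken in the extended reals ℝ ∪ {−∞}. -/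
/- STATEMENT 4 (pathwise content of Proposition 2.1, second assertion):
if y(t) − y(t−) = −(a(t) − a(t−)), y ≥ ξ on [0,t), and the left-jump Skorokhod
condition (y(t−) − limsup_{u↑t} ξ(u))·(a(t) − a(t−)) = 0 holds (in the extended
reals), then y(t−) = max(limsup_{u↑t} ξ(u), y(t)) in EReal. -/

open Filter Set


private lemma EReal.sub_nonneg' {x : EReal} {r : ℝ} (h : x ≤ (r : EReal)) :
    (0 : EReal) ≤ (r : EReal) - x := by
  induction x with
  | bot => simp
  | top => simp at h
  | coe s =>
    rw [← EReal.coe_sub]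
    exact_mod_cast _root_.sub_nonneg.2 (EReal.coe_le_coe_iff.1 h)

theorem rbsde_path_left_jump
    (T : ℝ) (hT : 0 < T) (ξ y a : ℝ → ℝ)
    (ha_mono : MonotoneOn a (Set.Icc 0 T))
    (t : ℝ) (ht : t ∈ Set.Ioc (0 : ℝ) T)
    (ym am : ℝ)
    (hy_lim : Tendsto y (nhdsWithin t (Set.Iio t)) (nhds ym))
    (ha_lim : Tendsto a (nhdsWithin t (Set.Iio t)) (nhds am))
    (hjump : y t - ym = -(a t - am))
    (hdom : ∀ u ∈ Set.Ico (0 : ℝ) t, ξ u ≤ y u)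
    (hskorokhod :
      ((ym : EReal) - limsup (fun u => (ξ u : EReal)) (nhdsWithin t (Set.Iio t)))
        * ((a t - am : ℝ) : EReal) = 0) :
    (ym : EReal) =
      max (limsup (fun u => (ξ u : EReal)) (nhdsWithin t (Set.Iio t))) ((y t : EReal)) := by

  set L := limsup (fun u => (ξ u : EReal)) (nhdsWithin t (Set.Iio t)) with hL
  have hne : (nhdsWithin t (Set.Iio t)).NeBot := nhdsLT_neBot t
  have hIoo : Set.Ioo 0 t ∈ nhdsWithin t (Set.Iio t) := Ioo_mem_nhdsLT ht.1
  -- am ≤ a t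
  have ham : am ≤ a t := by
    refine le_of_tendsto ha_lim ?_
    filter_upwards [hIoo] with u hu
    exact ha_mono ⟨le_of_lt hu.1, le_trans (le_of_lt hu.2) ht.2⟩ ⟨le_of_lt ht.1, ht.2⟩
      (le_of_lt hu.2)
  -- limsup of y in EReal is ym
  have hylim : Tendsto (fun u => (y u : EReal)) (nhdsWithin t (Set.Iio t)) (nhds (ym : EReal)) :=
    (EReal.tendsto_coe.2 hy_lim)
  have hyls : limsup (fun u => (y u : EReal)) (nhdsWithin t (Set.Iio t)) = (ym : EReal) :=
    hylim.limsup_eq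
  have hLym : L ≤ (ym : EReal) := by
    rw [hL, ← hyls]
    refine limsup_le_limsup ?_
    filter_upwards [hIoo] with u hu
    exact EReal.coe_le_coe_iff.2 (hdom u ⟨le_of_lt hu.1, hu.2⟩)
  rcases eq_or_lt_of_le ham with heq | hlt
  · -- a t = am, so y t = ym
    have hyt : y t = ym := by
      have : a t - am = 0 := by rw [← heq]; ring
      have := hjump; rw [this] at *; linarith [hjump, ‹a t - am = 0›]
    rw [hyt]
    exact (max_eq_right hLym).symm
  · -- am < a t, so ym - L = 0
    have hc : (0 : EReal) < ((a t - am : ℝ) : EReal) := by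
      exact_mod_cast sub_pos.2 hlt
    have hsub : (ym : EReal) - L = 0 := by
      by_contra h
      have hnn : (0 : EReal) ≤ (ym : EReal) - L :=
        EReal.sub_nonneg' hLym
      have hpos : 0 < (ym : EReal) - L := lt_of_le_of_ne hnn (Ne.symm h)
      have := EReal.mul_pos hpos hc
      rw [hskorokhod] at this
      exact lt_irrefl _ this
    have hLtop : L ≠ ⊤ := fun h => by simp [h] at hLym
    have hLbot : L ≠ ⊥ := fun h => by
      rw [h] at hsub
      simp [EReal.sub_bot] at hsub
    obtain ⟨r, hr⟩ : ∃ r : ℝ, L = (r : EReal) :=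
      ⟨L.toReal, (EReal.coe_toReal hLtop hLbot).symm⟩
    have hLreal : L = (ym : EReal) := by
      rw [hr] at hsub ⊢
      rw [← EReal.coe_sub] at hsub
      have : ym - r = 0 := by exact_mod_cast hsub
      have : r = ym := by linarith
      exact_mod_cast this
    have hyt : y t ≤ ym := by nlinarith [sub_pos.2 hlt]
    rw [hLreal]
    exact (max_eq_left (EReal.coe_le_coe_iff.2 hyt)).symm
end

section
/- Fix T > 0, let ξ, y, a : [0,T] → ℝ with a nondecreasing, and fix t ∈ (0,T]. Assume: the left limits y(t−) and a(t−) exist; y(t) − y(t−) = −(a(t) − a(t−)); y(u) ≥ ξ(u) for all u ∈ [0,t); the Skorokhod condition (y(t−) − limsup_{u↑t} ξ(u))·(a(t) − a(t−)) = 0 holds; ξ is left upper semicontinuous at t, i.e. limsup_{u↑t} ξ(u) ≤ ξ(t); and y(t) ≥ ξ(t). Then y(t−) = y(t); in particular a(t−) = a(t), i.e. a has no left jump at t. -/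
/- STATEMENT 5 (pathwise content of Lemma 2.1): under the left-jump relation
y(t) − y(t−) = −(a(t) − a(t−)), the left-jump Skorokhod condition, left upper
semicontinuity of ξ at t (limsup_{u↑t} ξ(u) ≤ ξ(t)) and y(t) ≥ ξ(t), one has
y(t−) = y(t), and in particular a(t−) = a(t). -/

open Filter Set

theorem rbsde_path_no_left_jump
    (T : ℝ) (hT : 0 < T) (ξ y a : ℝ → ℝ)
    (ha_mono : MonotoneOn a (Set.Icc 0 T))
    (t : ℝ) (ht : t ∈ Set.Ioc (0 : ℝ) T)
    (ym am : ℝ)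
    (hy_lim : Tendsto y (nhdsWithin t (Set.Iio t)) (nhds ym))
    (ha_lim : Tendsto a (nhdsWithin t (Set.Iio t)) (nhds am))
    (hjump : y t - ym = -(a t - am))
    (hdom : ∀ u ∈ Set.Ico (0 : ℝ) t, ξ u ≤ y u)
    (hskorokhod :
      ((ym : EReal) - limsup (fun u => (ξ u : EReal)) (nhdsWithin t (Set.Iio t)))
        * ((a t - am : ℝ) : EReal) = 0)
    (hlusc : limsup (fun u => (ξ u : EReal)) (nhdsWithin t (Set.Iio t)) ≤ (ξ t : EReal))
    (hyξ : ξ t ≤ y t) :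
    ym = y t ∧ am = a t := by
  obtain ⟨ht0, htT⟩ := ht
  -- the punctured left filter is nontrivial
  have hne : (nhdsWithin t (Set.Iio t)).NeBot := by
    exact nhdsLT_neBot t
  -- am ≤ a t
  have ham_le : am ≤ a t := by
    have hev : ∀ᶠ u in nhdsWithin t (Set.Iio t), a u ≤ a t := by
      filter_upwards [Ioo_mem_nhdsLT_of_mem (by constructor <;> linarith :
        t ∈ Set.Ioc (0 : ℝ) t)] with u hu
      exact ha_mono ⟨le_of_lt hu.1, le_of_lt (lt_of_lt_of_le hu.2 htT)⟩
        ⟨le_of_lt ht0, htT⟩ (le_of_lt hu.2)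
    exact le_of_tendsto ha_lim hev
  rcases eq_or_lt_of_le ham_le with heq | hlt
  · constructor
    · linarith [hjump, heq]
    · exact heq
  · exfalso
    have hc : (0 : ℝ) < a t - am := by linarith
    set L := limsup (fun u => (ξ u : EReal)) (nhdsWithin t (Set.Iio t)) with hL
    clear_value L
    have hymle : ym ≤ y t := by
      induction L using EReal.rec with
      | bot =>
          rw [EReal.coe_sub_bot, EReal.top_mul_coe_of_pos hc] at hskorokhod
          exact absurd hskorokhod (by simp)
      | coe l =>
          rw [← EReal.coe_sub, ← EReal.coe_mul] at hskorokhod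
          have h2 : (ym - l) * (a t - am) = 0 := by exact_mod_cast hskorokhod
          have h3 : ym = l := by
            rcases mul_eq_zero.mp h2 with h | h
            · linarith
            · linarith
          have h4 : l ≤ ξ t := by exact_mod_cast hlusc
          linarith
      | top =>
          exact absurd hlusc (not_le_of_gt (EReal.coe_lt_top _))
    linarith
end

section
/- Fix T > 0 and let ξ, y : [0,T] → ℝ. Assume that for every t ∈ [0,T) the right limits ξ(t+) = lim_{u↓t} ξ(u) and y(t+) = lim_{u↓t} y(u) exist, that ξ(t) ≤ ξ(t+) for every t ∈ [0,T), that y(s) ≥ ξ(s) for all s ∈ [0,T], and that y(t) = max(ξ(t), y(t+)) for every t ∈ [0,T). Then y(t) = y(t+) for every t ∈ [0,T), i.e. y is right-continuous on [0,T). -/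
/- STATEMENT 6 (pathwise content of Lemma 2.2): if ξ(t) ≤ ξ(t+) for every t ∈ [0,T),
y ≥ ξ on [0,T], and y(t) = max(ξ(t), y(t+)) for every t ∈ [0,T), then y(t) = y(t+)
for every t ∈ [0,T), i.e. y is right-continuous on [0,T). -/

open Filter Set

theorem rbsde_path_right_continuous
    (T : ℝ) (hT : 0 < T) (ξ y : ℝ → ℝ) (ξp yp : ℝ → ℝ)
    (hξ_lim : ∀ t ∈ Set.Ico (0 : ℝ) T,
      Tendsto ξ (nhdsWithin t (Set.Ioo t T)) (nhds (ξp t)))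
    (hy_lim : ∀ t ∈ Set.Ico (0 : ℝ) T,
      Tendsto y (nhdsWithin t (Set.Ioo t T)) (nhds (yp t)))
    (hξ_rusc : ∀ t ∈ Set.Ico (0 : ℝ) T, ξ t ≤ ξp t)
    (hdom : ∀ s ∈ Set.Icc (0 : ℝ) T, ξ s ≤ y s)
    (hmax : ∀ t ∈ Set.Ico (0 : ℝ) T, y t = max (ξ t) (yp t)) :
    ∀ t ∈ Set.Ico (0 : ℝ) T, y t = yp t := by
  intro t ht
  have hne : (nhdsWithin t (Set.Ioo t T)).NeBot := by
    exact left_nhdsWithin_Ioo_neBot ht.2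
  have hξy : ξp t ≤ yp t := by
    refine le_of_tendsto_of_tendsto (hξ_lim t ht) (hy_lim t ht) ?_
    filter_upwards [self_mem_nhdsWithin] with u hu
    exact hdom u ⟨le_of_lt (lt_of_le_of_lt ht.1 hu.1), le_of_lt hu.2⟩
  have : ξ t ≤ yp t := le_trans (hξ_rusc t ht) hξy
  rw [hmax t ht, max_eq_right this]
end

section
/- Let ξ and ξ^1, ξ^2, … be reward processes with value families (V(S))_{S∈𝓣_0} and (V^n(S))_{S∈𝓣_0}. Suppose there are nonnegative square-integrable random variables M_n such that P-a.s., |ξ^n_t − ξ_t| ≤ M_n for all t ∈ [0,T], and E[M_n²] → 0 as n → ∞. Then for every stopping time S ∈ 𝓣_0, V^n(S) − V(S) is square-integrable for every n, E[|V^n(S) − V(S)|²] ≤ E[M_n²], and in particular V^n(S) → V(S) in L²(P). -/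
/- STATEMENT 8: L²-stability of value families: if |ξ^n_t − ξ_t| ≤ M_n a.s. for all
t ∈ [0,T] with M_n ≥ 0 square-integrable and E[M_n²] → 0, then for every stopping
time S, V^n(S) − V(S) is square-integrable, E[|V^n(S) − V(S)|²] ≤ E[M_n²], and
V^n(S) → V(S) in L²(P). -/

open MeasureTheory Filter

open MeasureTheory Filter

variable {Ω : Type*}

/-- A reward process: progressively measurable, with `ξ_τ` integrable for every
stopping time `τ` with values in `[0,T]`. -/
def IsRewardProcess {m0 : MeasurableSpace Ω} (𝓕 : Filtration ℝ m0) (P : Measure Ω)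
    (T : ℝ) (ξ : ℝ → Ω → ℝ) : Prop :=
  ProgMeasurable 𝓕 ξ ∧
    ∀ τ : Ω → ℝ, IsStoppingTime 𝓕 (fun ω => (τ ω : WithTop ℝ)) → (∀ ω, τ ω ∈ Set.Icc 0 T) →
      Integrable (fun ω => ξ (τ ω) ω) P

/-- `V` is the value family of the optimal stopping problem with reward `ξ`:
for every stopping time `S` with values in `[0,T]`, `V S` is `𝓕_S`-measurable,
integrable, dominates `E[ξ_τ | 𝓕_S]` for every stopping time `τ` with `S ≤ τ ≤ T`
a.s., and is a.s. smallest with this property, i.e.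
`V S = ess sup_{τ ∈ 𝓣_S} E[ξ_τ | 𝓕_S]`. -/
def IsValueFamily {m0 : MeasurableSpace Ω} (𝓕 : Filtration ℝ m0) (P : Measure Ω)
    (T : ℝ) (ξ : ℝ → Ω → ℝ) (V : (Ω → ℝ) → Ω → ℝ) : Prop :=
  ∀ S : Ω → ℝ, ∀ hS : IsStoppingTime 𝓕 (fun ω => (S ω : WithTop ℝ)), (∀ ω, S ω ∈ Set.Icc 0 T) →
    Measurable[hS.measurableSpace] (V S) ∧ Integrable (V S) P ∧
    (∀ τ : Ω → ℝ, IsStoppingTime 𝓕 (fun ω => (τ ω : WithTop ℝ)) → (∀ ω, τ ω ∈ Set.Icc 0 T) →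
      (∀ᵐ ω ∂P, S ω ≤ τ ω) →
      ∀ᵐ ω ∂P, (P[fun ω' => ξ (τ ω') ω' | hS.measurableSpace]) ω ≤ V S ω) ∧
    (∀ W : Ω → ℝ, Measurable[hS.measurableSpace] W → Integrable W P →
      (∀ τ : Ω → ℝ, IsStoppingTime 𝓕 (fun ω => (τ ω : WithTop ℝ)) → (∀ ω, τ ω ∈ Set.Icc 0 T) →
        (∀ᵐ ω ∂P, S ω ≤ τ ω) →
        ∀ᵐ ω ∂P, (P[fun ω' => ξ (τ ω') ω' | hS.measurableSpace]) ω ≤ W ω) →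
      ∀ᵐ ω ∂P, V S ω ≤ W ω)



/-- Conditional Jensen for the square, via tangent lines with rational slopes. -/
lemma condexp_sq_jensen {m m0 : MeasurableSpace Ω} (hm : m ≤ m0) (P : Measure Ω)
    [IsProbabilityMeasure P] (M : Ω → ℝ) (hM : Integrable M P)
    (hM2 : Integrable (fun ω => M ω ^ 2) P) :
    ∀ᵐ ω ∂P, (P[M|m]) ω ^ 2 ≤ (P[fun ω => M ω ^ 2|m]) ω := by
  have hq : ∀ q : ℚ, ∀ᵐ ω ∂P,
      2 * (q : ℝ) * (P[M|m]) ω - (q : ℝ) ^ 2 ≤ (P[fun ω => M ω ^ 2|m]) ω := by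
    intro q
    have hint : Integrable ((2 * (q : ℝ)) • M - fun _ => (q : ℝ) ^ 2) P :=
      (hM.smul _).sub (integrable_const _)
    have hle : ((2 * (q : ℝ)) • M - fun _ => (q : ℝ) ^ 2) ≤ᵐ[P] fun ω => M ω ^ 2 :=
      Filter.Eventually.of_forall fun ω => by
        simp only [Pi.sub_apply, Pi.smul_apply, smul_eq_mul]
        nlinarith [sq_nonneg (M ω - (q : ℝ))]
    have h1 := condExp_mono (μ := P) (m := m) hint hM2 hle
    have h2 : P[(2 * (q : ℝ)) • M - fun _ => (q : ℝ) ^ 2|m]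
        =ᵐ[P] fun ω => 2 * (q : ℝ) * (P[M|m]) ω - (q : ℝ) ^ 2 := by
      refine (condExp_sub (m := m) (hM.smul _) (integrable_const _)).trans ?_
      have hsm := condExp_smul (μ := P) (m := m) (2 * (q : ℝ)) M
      have hc : P[(fun _ => (q : ℝ) ^ 2 : Ω → ℝ)|m] = fun _ => (q : ℝ) ^ 2 :=
        condExp_const hm _
      filter_upwards [hsm] with ω hω
      simp only [Pi.sub_apply, hc, Pi.smul_apply, smul_eq_mul] at *
      rw [hω]
    filter_upwards [h1, h2] with ω h1 h2
    rw [← h2]; exact h1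
  rw [← ae_all_iff] at hq
  filter_upwards [hq] with ω hω
  refine le_of_forall_pos_le_add fun ε hε => ?_
  set r := (P[M|m]) ω with hr
  have hd : (0 : ℝ) < min ε 1 := lt_min hε one_pos
  obtain ⟨q, hqr⟩ := exists_rat_near r hd
  rw [abs_lt] at hqr
  have h := hω q
  have h1 : (r - (q : ℝ)) ^ 2 < ε := by
    nlinarith [min_le_left ε 1, min_le_right ε 1, hqr.1, hqr.2]
  nlinarith [h, h1]

/-- One-sided comparison of value families under an additive a.s. bound. -/
lemma value_family_le_aux {m0 : MeasurableSpace Ω} (𝓕 : Filtration ℝ m0) (P : Measure Ω)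
    [IsProbabilityMeasure P] (T : ℝ)
    (ξ η : ℝ → Ω → ℝ) (V W : (Ω → ℝ) → Ω → ℝ)
    (hξ : IsRewardProcess 𝓕 P T ξ) (hη : IsRewardProcess 𝓕 P T η)
    (hV : IsValueFamily 𝓕 P T ξ V) (hW : IsValueFamily 𝓕 P T η W)
    (M : Ω → ℝ) (hM : Integrable M P)
    (hbound : ∀ᵐ ω ∂P, ∀ t ∈ Set.Icc (0 : ℝ) T, η t ω ≤ ξ t ω + M ω)
    (S : Ω → ℝ) (hS : IsStoppingTime 𝓕 (fun ω => (S ω : WithTop ℝ))) (hSm : ∀ ω, S ω ∈ Set.Icc 0 T) :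
    ∀ᵐ ω ∂P, W S ω ≤ V S ω + (P[M|hS.measurableSpace]) ω := by
  have hm : hS.measurableSpace ≤ m0 := hS.measurableSpace_le
  obtain ⟨hWmeas, hWint, hWdom, hWmin⟩ := hW S hS hSm
  obtain ⟨hVmeas, hVint, hVdom, hVmin⟩ := hV S hS hSm
  refine hWmin (fun ω => V S ω + (P[M|hS.measurableSpace]) ω)
    (hVmeas.add (stronglyMeasurable_condExp.measurable)) (hVint.add integrable_condExp) ?_
  intro τ hτ hτm hSτ
  have hintξ : Integrable (fun ω => ξ (τ ω) ω) P := hξ.2 τ hτ hτm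
  have hintη : Integrable (fun ω => η (τ ω) ω) P := hη.2 τ hτ hτm
  have h1 : (fun ω => η (τ ω) ω) ≤ᵐ[P] ((fun ω => ξ (τ ω) ω) + M) := by
    filter_upwards [hbound] with ω h using h (τ ω) (hτm ω)
  have h2 := condExp_mono (μ := P) (m := hS.measurableSpace) hintη (hintξ.add hM) h1
  have h3 := condExp_add (μ := P) (m := hS.measurableSpace) hintξ hM
  have h4 := hVdom τ hτ hτm hSτ
  filter_upwards [h2, h3, h4] with ω h2 h3 h4
  calc (P[fun ω' => η (τ ω') ω'|hS.measurableSpace]) ω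
      ≤ (P[(fun ω' => ξ (τ ω') ω') + M|hS.measurableSpace]) ω := h2
    _ = (P[fun ω' => ξ (τ ω') ω'|hS.measurableSpace]) ω
        + (P[M|hS.measurableSpace]) ω := h3
    _ ≤ V S ω + (P[M|hS.measurableSpace]) ω := by linarith


theorem value_family_L2_stability
    {m0 : MeasurableSpace Ω} (𝓕 : Filtration ℝ m0) (P : Measure Ω)
    [IsProbabilityMeasure P] (T : ℝ) (hT : 0 < T)
    (ξ : ℝ → Ω → ℝ) (ξn : ℕ → ℝ → Ω → ℝ)
    (V : (Ω → ℝ) → Ω → ℝ) (Vn : ℕ → (Ω → ℝ) → Ω → ℝ)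
    (hξ : IsRewardProcess 𝓕 P T ξ) (hξn : ∀ n, IsRewardProcess 𝓕 P T (ξn n))
    (hV : IsValueFamily 𝓕 P T ξ V) (hVn : ∀ n, IsValueFamily 𝓕 P T (ξn n) (Vn n))
    (M : ℕ → Ω → ℝ) (hM_nonneg : ∀ n ω, 0 ≤ M n ω)
    (hM_sq : ∀ n, MemLp (M n) 2 P)
    (hbound : ∀ n, ∀ᵐ ω ∂P, ∀ t ∈ Set.Icc (0 : ℝ) T, |ξn n t ω - ξ t ω| ≤ M n ω)
    (hM_to_zero : Tendsto (fun n => ∫ ω, (M n ω) ^ 2 ∂P) atTop (nhds 0)) :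
    ∀ S : Ω → ℝ, IsStoppingTime 𝓕 (fun ω => (S ω : WithTop ℝ)) → (∀ ω, S ω ∈ Set.Icc 0 T) →
      (∀ n, MemLp (fun ω => Vn n S ω - V S ω) 2 P) ∧
      (∀ n, ∫ ω, |Vn n S ω - V S ω| ^ 2 ∂P ≤ ∫ ω, (M n ω) ^ 2 ∂P) ∧
      Tendsto (fun n => ∫ ω, |Vn n S ω - V S ω| ^ 2 ∂P) atTop (nhds 0) := by
  intro S hS hSm
  have hm : hS.measurableSpace ≤ m0 := hS.measurableSpace_le
  have hmeasdiff : ∀ n, Measurable (fun ω => Vn n S ω - V S ω) := fun n =>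
    (((hVn n) S hS hSm).1.mono hm le_rfl).sub ((hV S hS hSm).1.mono hm le_rfl)
  have key : ∀ n, Integrable (fun ω => |Vn n S ω - V S ω| ^ 2) P ∧
      ∫ ω, |Vn n S ω - V S ω| ^ 2 ∂P ≤ ∫ ω, (M n ω) ^ 2 ∂P := by
    intro n
    have hMint : Integrable (M n) P := (hM_sq n).integrable one_le_two
    have hM2int : Integrable (fun ω => (M n ω) ^ 2) P :=
      (memLp_two_iff_integrable_sq (hM_sq n).aestronglyMeasurable).1 (hM_sq n)
    have hb1 : ∀ᵐ ω ∂P, ∀ t ∈ Set.Icc (0 : ℝ) T, ξn n t ω ≤ ξ t ω + M n ω := by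
      filter_upwards [hbound n] with ω h t ht
      have := abs_le.1 (h t ht); linarith [this.2]
    have hb2 : ∀ᵐ ω ∂P, ∀ t ∈ Set.Icc (0 : ℝ) T, ξ t ω ≤ ξn n t ω + M n ω := by
      filter_upwards [hbound n] with ω h t ht
      have := abs_le.1 (h t ht); linarith [this.1]
    have hup := value_family_le_aux 𝓕 P T ξ (ξn n) V (Vn n) hξ (hξn n) hV (hVn n)
      (M n) hMint hb1 S hS hSm
    have hlo := value_family_le_aux 𝓕 P T (ξn n) ξ (Vn n) V (hξn n) hξ (hVn n) hV
      (M n) hMint hb2 S hS hSm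
    have habs : ∀ᵐ ω ∂P, |Vn n S ω - V S ω| ≤ (P[M n|hS.measurableSpace]) ω := by
      filter_upwards [hup, hlo] with ω h1 h2
      rw [abs_le]; constructor <;> linarith
    have hjensen := condexp_sq_jensen hm P (M n) hMint hM2int
    have hEnonneg : ∀ᵐ ω ∂P, 0 ≤ (P[fun ω => (M n ω) ^ 2|hS.measurableSpace]) ω :=
      condExp_nonneg (Filter.Eventually.of_forall fun ω => sq_nonneg _)
    have hsqle : ∀ᵐ ω ∂P,
        |Vn n S ω - V S ω| ^ 2 ≤ (P[fun ω => (M n ω) ^ 2|hS.measurableSpace]) ω := by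
      filter_upwards [habs, hjensen] with ω h1 h2
      nlinarith [abs_nonneg (Vn n S ω - V S ω)]
    have hEint : Integrable (P[fun ω => (M n ω) ^ 2|hS.measurableSpace]) P :=
      integrable_condExp
    have hdint : Integrable (fun ω => |Vn n S ω - V S ω| ^ 2) P := by
      refine hEint.mono (((hmeasdiff n).abs.pow_const 2).aestronglyMeasurable) ?_
      filter_upwards [hsqle, hEnonneg] with ω h1 h2
      rw [Real.norm_eq_abs, Real.norm_eq_abs, abs_of_nonneg (sq_nonneg _), abs_of_nonneg h2]
      exact h1
    refine ⟨hdint, ?_⟩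
    calc ∫ ω, |Vn n S ω - V S ω| ^ 2 ∂P
        ≤ ∫ ω, (P[fun ω => (M n ω) ^ 2|hS.measurableSpace]) ω ∂P :=
          integral_mono_ae hdint hEint hsqle
      _ = ∫ ω, (M n ω) ^ 2 ∂P := integral_condExp hm
  refine ⟨fun n => ?_, fun n => (key n).2, ?_⟩
  · refine (memLp_two_iff_integrable_sq (hmeasdiff n).aestronglyMeasurable).2 ?_
    simpa [sq_abs] using (key n).1
  · exact squeeze_zero (fun n => integral_nonneg fun ω => sq_nonneg _)
      (fun n => (key n).2) hM_to_zero
end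

section
/- Let ξ be a reward process such that there is an integrable random variable M with P-a.s. |ξ_t| ≤ M for all t ∈ [0,T], and let (V(S))_{S∈𝓣_0} be its value family. Let S, θ be stopping times with S ≤ θ a.s., assume V admits monotone approximation at θ, and let α be a bounded nonnegative 𝓕_θ-measurable random variable. Then E[α·V(θ) | 𝓕_S] is the essential supremum over τ ∈ 𝓣_θ of E[α·ξ_τ | 𝓕_S], i.e.: (a) E[α·V(θ) | 𝓕_S] ≥ E[α·ξ_τ | 𝓕_S] a.s. for every τ ∈ 𝓣_θ; and (b) every 𝓕_S-measurable integrable random variable W with W ≥ E[α·ξ_τ | 𝓕_S] a.s. for all τ ∈ 𝓣_θ satisfies W ≥ E[α·V(θ) | 𝓕_S] a.s. -/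
/- STATEMENT 11 (Proposition 4.1, classical expectation): for stopping times S ≤ θ and
a bounded nonnegative 𝓕_θ-measurable α, E[α·V(θ) | 𝓕_S] is the essential supremum
over τ ∈ 𝓣_θ of E[α·ξ_τ | 𝓕_S]. -/

open MeasureTheory Filter

open MeasureTheory Filter

variable {Ω : Type*}

/-- The value family `V` admits monotone approximation at the stopping time `θ`:
there is a sequence `(τ n)` in `𝓣_θ` with `E[ξ_{τ n} | 𝓕_θ]` a.s. nondecreasing in `n`
and converging a.s. to `V θ`. -/
def AdmitsMonotoneApprox {m0 : MeasurableSpace Ω} (𝓕 : Filtration ℝ m0) (P : Measure Ω)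
    (T : ℝ) (ξ : ℝ → Ω → ℝ) (V : (Ω → ℝ) → Ω → ℝ)
    (θ : Ω → ℝ) (hθ : IsStoppingTime 𝓕 (fun ω => (θ ω : WithTop ℝ))) : Prop :=
  ∃ τ : ℕ → Ω → ℝ,
    (∀ n, IsStoppingTime 𝓕 (fun ω => (τ n ω : WithTop ℝ))) ∧ (∀ n ω, τ n ω ∈ Set.Icc 0 T) ∧
    (∀ n, ∀ᵐ ω ∂P, θ ω ≤ τ n ω) ∧
    (∀ᵐ ω ∂P, Monotone fun n => (P[fun ω' => ξ (τ n ω') ω' | hθ.measurableSpace]) ω) ∧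
    (∀ᵐ ω ∂P, Tendsto (fun n => (P[fun ω' => ξ (τ n ω') ω' | hθ.measurableSpace]) ω)
      atTop (nhds (V θ ω)))

section Aux

variable {m m0 : MeasurableSpace Ω}

lemma condexp_le_condexp_of_forall_setIntegral_le
    (hm : m ≤ m0) {P : Measure Ω} [IsFiniteMeasure P]
    {f g : Ω → ℝ} (hf : Integrable f P) (hg : Integrable g P)
    (h : ∀ A : Set Ω, MeasurableSet[m] A → ∫ ω in A, f ω ∂P ≤ ∫ ω in A, g ω ∂P) :
    ∀ᵐ ω ∂P, (P[f|m]) ω ≤ (P[g|m]) ω := by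
  refine ae_of_ae_trim hm ?_
  have hfm : StronglyMeasurable[m] (P[f|m]) := stronglyMeasurable_condExp
  have hgm : StronglyMeasurable[m] (P[g|m]) := stronglyMeasurable_condExp
  refine ae_le_of_forall_setIntegral_le (integrable_condExp.trim hm hfm)
    (integrable_condExp.trim hm hgm) ?_
  intro s hs _
  rw [← setIntegral_trim hm hfm hs, ← setIntegral_trim hm hgm hs,
    setIntegral_condExp hm hf hs, setIntegral_condExp hm hg hs]
  exact h s hs

end Aux

theorem value_family_bellman
    {m0 : MeasurableSpace Ω} (𝓕 : Filtration ℝ m0) (P : Measure Ω)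
    [IsProbabilityMeasure P] (T : ℝ) (hT : 0 < T)
    (ξ : ℝ → Ω → ℝ) (V : (Ω → ℝ) → Ω → ℝ)
    (hξ : IsRewardProcess 𝓕 P T ξ) (hV : IsValueFamily 𝓕 P T ξ V)
    (M : Ω → ℝ) (hM_int : Integrable M P)
    (hbound : ∀ᵐ ω ∂P, ∀ t ∈ Set.Icc (0 : ℝ) T, |ξ t ω| ≤ M ω)
    (S θ : Ω → ℝ) (hS : IsStoppingTime 𝓕 (fun ω => (S ω : WithTop ℝ))) (hθ : IsStoppingTime 𝓕 (fun ω => (θ ω : WithTop ℝ)))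
    (hST : ∀ ω, S ω ∈ Set.Icc 0 T) (hθT : ∀ ω, θ ω ∈ Set.Icc 0 T)
    (hSθ : ∀ᵐ ω ∂P, S ω ≤ θ ω)
    (happrox : AdmitsMonotoneApprox 𝓕 P T ξ V θ hθ)
    (α : Ω → ℝ) (hα_meas : Measurable[hθ.measurableSpace] α)
    (hα_nonneg : ∀ ω, 0 ≤ α ω) (hα_bdd : ∃ C : ℝ, ∀ ω, α ω ≤ C) :
    -- (a) E[α·V(θ) | 𝓕_S] dominates each E[α·ξ_τ | 𝓕_S], τ ∈ 𝓣_θ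
    (∀ τ : Ω → ℝ, IsStoppingTime 𝓕 (fun ω => (τ ω : WithTop ℝ)) → (∀ ω, τ ω ∈ Set.Icc 0 T) →
      (∀ᵐ ω ∂P, θ ω ≤ τ ω) →
      ∀ᵐ ω ∂P, (P[fun ω' => α ω' * ξ (τ ω') ω' | hS.measurableSpace]) ω
        ≤ (P[fun ω' => α ω' * V θ ω' | hS.measurableSpace]) ω) ∧
    -- (b) it is a.s. smallest with this property
    (∀ W : Ω → ℝ, Measurable[hS.measurableSpace] W → Integrable W P →
      (∀ τ : Ω → ℝ, IsStoppingTime 𝓕 (fun ω => (τ ω : WithTop ℝ)) → (∀ ω, τ ω ∈ Set.Icc 0 T) →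
        (∀ᵐ ω ∂P, θ ω ≤ τ ω) →
        ∀ᵐ ω ∂P, (P[fun ω' => α ω' * ξ (τ ω') ω' | hS.measurableSpace]) ω ≤ W ω) →
      ∀ᵐ ω ∂P, (P[fun ω' => α ω' * V θ ω' | hS.measurableSpace]) ω ≤ W ω) := by
  classical
  obtain ⟨C₀, hC₀⟩ := hα_bdd
  set C : ℝ := max C₀ 0 with hCdef
  have hmS : hS.measurableSpace ≤ m0 := hS.measurableSpace_le
  have hmθ : hθ.measurableSpace ≤ m0 := hθ.measurableSpace_le
  have hα_m0 : Measurable α := hα_meas.mono hmθ le_rfl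
  have hα_norm : ∀ ω, ‖α ω‖ ≤ C := fun ω => by
    rw [Real.norm_eq_abs, abs_of_nonneg (hα_nonneg ω)]
    exact le_max_of_le_left (hC₀ ω)
  obtain ⟨hVmeas, hVint, hVdom, hVmin⟩ := hV θ hθ hθT
  have hαV_int : Integrable (fun ω => α ω * V θ ω) P :=
    hVint.bdd_mul hα_m0.aestronglyMeasurable (Filter.Eventually.of_forall hα_norm)
  -- integrability of α·ξ_τ and α·E[ξ_τ|𝓕_θ]
  have hξτ_int : ∀ τ : Ω → ℝ, IsStoppingTime 𝓕 (fun ω => (τ ω : WithTop ℝ)) → (∀ ω, τ ω ∈ Set.Icc 0 T) →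
      Integrable (fun ω => ξ (τ ω) ω) P := hξ.2
  have hαξτ_int : ∀ τ : Ω → ℝ, IsStoppingTime 𝓕 (fun ω => (τ ω : WithTop ℝ)) → (∀ ω, τ ω ∈ Set.Icc 0 T) →
      Integrable (fun ω => α ω * ξ (τ ω) ω) P := fun τ hτ hτT =>
    (hξτ_int τ hτ hτT).bdd_mul hα_m0.aestronglyMeasurable (Filter.Eventually.of_forall hα_norm)
  have hαE_int : ∀ τ : Ω → ℝ,
      Integrable (fun ω => α ω * (P[fun ω' => ξ (τ ω') ω'|hθ.measurableSpace]) ω) P :=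
    fun τ => integrable_condExp.bdd_mul hα_m0.aestronglyMeasurable (Filter.Eventually.of_forall hα_norm)
  -- the key identity: for A ∈ 𝓕_S and τ ∈ 𝓣_θ,
  -- ∫_A α ξ_τ = ∫_A α E[ξ_τ|𝓕_θ]
  have key : ∀ τ : Ω → ℝ, IsStoppingTime 𝓕 (fun ω => (τ ω : WithTop ℝ)) → (∀ ω, τ ω ∈ Set.Icc 0 T) →
      ∀ A : Set Ω, MeasurableSet[hS.measurableSpace] A →
      ∫ ω in A, α ω * ξ (τ ω) ω ∂P
        = ∫ ω in A, α ω * (P[fun ω' => ξ (τ ω') ω'|hθ.measurableSpace]) ω ∂P := by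
    intro τ hτ hτT A hA
    set A' : Set Ω := A ∩ {ω | S ω ≤ θ ω} with hA'def
    have hA'θ : MeasurableSet[hθ.measurableSpace] A' := by
      have h1 := hS.measurableSet_inter_le hθ A hA
      simp only [WithTop.coe_le_coe] at h1
      exact (hS.min hθ).measurableSpace_mono hθ (fun ω => min_le_right _ _) _ h1
    have hA'm0 : MeasurableSet A' := hmθ _ hA'θ
    have hAA' : A =ᵐ[P] A' := by
      rw [Filter.eventuallyEq_set]
      filter_upwards [hSθ] with ω hω
      simp [hA'def, hω]
    set g : Ω → ℝ := A'.indicator α with hgdef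
    have hg_sm : StronglyMeasurable[hθ.measurableSpace] g :=
      (hα_meas.stronglyMeasurable).indicator hA'θ
    have hg_norm : ∀ ω, ‖g ω‖ ≤ C := fun ω => by
      by_cases hω : ω ∈ A'
      · rw [hgdef, Set.indicator_of_mem hω]; exact hα_norm ω
      · rw [hgdef, Set.indicator_of_notMem hω]; simp [hCdef, le_max_right]
    have hg_m0 : AEStronglyMeasurable g P :=
      (hg_sm.mono hmθ).aestronglyMeasurable
    have hgξ_int : Integrable (g * fun ω => ξ (τ ω) ω) P :=
      (hξτ_int τ hτ hτT).bdd_mul hg_m0 (Filter.Eventually.of_forall hg_norm)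
    have hpull := condExp_mul_of_stronglyMeasurable_left (μ := P) hg_sm hgξ_int (hξτ_int τ hτ hτT)
    have hind : ∀ h : Ω → ℝ, ∫ ω in A, α ω * h ω ∂P = ∫ ω, g ω * h ω ∂P := by
      intro h
      rw [setIntegral_congr_set hAA', ← integral_indicator hA'm0]
      congr 1 with ω
      by_cases hω : ω ∈ A'
      · rw [Set.indicator_of_mem hω, hgdef, Set.indicator_of_mem hω]
      · rw [Set.indicator_of_notMem hω, hgdef, Set.indicator_of_notMem hω, zero_mul]
    rw [hind (fun ω => ξ (τ ω) ω), hind (fun ω => (P[fun ω' => ξ (τ ω') ω'|hθ.measurableSpace]) ω)]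
    calc ∫ ω, g ω * ξ (τ ω) ω ∂P
        = ∫ ω, (P[g * fun ω' => ξ (τ ω') ω'|hθ.measurableSpace]) ω ∂P :=
          (integral_condExp hmθ).symm
      _ = ∫ ω, (g * P[fun ω' => ξ (τ ω') ω'|hθ.measurableSpace]) ω ∂P :=
          integral_congr_ae hpull
      _ = ∫ ω, g ω * (P[fun ω' => ξ (τ ω') ω'|hθ.measurableSpace]) ω ∂P := rfl
  constructor
  · -- (a)
    intro τ hτ hτT hθτ
    refine condexp_le_condexp_of_forall_setIntegral_le hmS (hαξτ_int τ hτ hτT) hαV_int ?_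
    intro A hA
    rw [key τ hτ hτT A hA]
    have hle : ∀ᵐ ω ∂P, α ω * (P[fun ω' => ξ (τ ω') ω'|hθ.measurableSpace]) ω
        ≤ α ω * V θ ω := by
      filter_upwards [hVdom τ hτ hτT hθτ] with ω hω
      exact mul_le_mul_of_nonneg_left hω (hα_nonneg ω)
    exact integral_mono_ae ((hαE_int τ).integrableOn) (hαV_int.integrableOn)
      (ae_restrict_of_ae hle)
  · -- (b)
    intro W hWmeas hWint hWdom
    obtain ⟨τs, hτs_stop, hτs_range, hτs_ge, hmono, htend⟩ := happrox
    have hWsm : StronglyMeasurable[hS.measurableSpace] W := hWmeas.stronglyMeasurable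
    have hM_nonneg : ∀ᵐ ω ∂P, 0 ≤ M ω := by
      filter_upwards [hbound] with ω hω
      exact le_trans (abs_nonneg _) (hω 0 ⟨le_refl 0, le_of_lt hT⟩)
    have hcondM_nonneg : ∀ᵐ ω ∂P, 0 ≤ (P[M|hθ.measurableSpace]) ω := condExp_nonneg hM_nonneg
    have habs : ∀ n, ∀ᵐ ω ∂P,
        |(P[fun ω' => ξ (τs n ω') ω'|hθ.measurableSpace]) ω| ≤ (P[M|hθ.measurableSpace]) ω := by
      intro n
      have hb : ∀ᵐ ω ∂P, |ξ (τs n ω) ω| ≤ M ω := by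
        filter_upwards [hbound] with ω hω
        exact hω _ (hτs_range n ω)
      have h1 : ∀ᵐ ω ∂P, (P[fun ω' => ξ (τs n ω') ω'|hθ.measurableSpace]) ω
          ≤ (P[M|hθ.measurableSpace]) ω :=
        condExp_mono (hξτ_int _ (hτs_stop n) (hτs_range n)) hM_int
          (by filter_upwards [hb] with ω hω; exact le_trans (le_abs_self _) hω)
      have h2 : ∀ᵐ ω ∂P, (P[fun ω' => -ξ (τs n ω') ω'|hθ.measurableSpace]) ω
          ≤ (P[M|hθ.measurableSpace]) ω :=
        condExp_mono ((hξτ_int _ (hτs_stop n) (hτs_range n)).neg) hM_int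
          (by filter_upwards [hb] with ω hω; exact le_trans (neg_le_abs _) hω)
      have h3 := condExp_neg (μ := P) (m := hθ.measurableSpace)
        (fun ω' => ξ (τs n ω') ω')
      filter_upwards [h1, h2, h3] with ω hω1 hω2 hω3
      rw [abs_le]
      refine ⟨?_, hω1⟩
      have := hω2
      rw [show (fun ω' => -ξ (τs n ω') ω') = -(fun ω' => ξ (τs n ω') ω') from rfl, hω3] at this
      simp only [Pi.neg_apply] at this
      exact neg_le.mp this
    have hWce : P[W|hS.measurableSpace] = W := condExp_of_stronglyMeasurable hmS hWsm hWint
    have hsets : ∀ A : Set Ω, MeasurableSet[hS.measurableSpace] A →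
        ∫ ω in A, α ω * V θ ω ∂P ≤ ∫ ω in A, W ω ∂P := by
      intro A hA
      have hAm0 : MeasurableSet A := hmS _ hA
      -- each n: ∫_A α ξ_{τs n} ≤ ∫_A W
      have hstep : ∀ n, ∫ ω in A,
          α ω * (P[fun ω' => ξ (τs n ω') ω'|hθ.measurableSpace]) ω ∂P ≤ ∫ ω in A, W ω ∂P := by
        intro n
        rw [← key _ (hτs_stop n) (hτs_range n) A hA]
        have := hWdom (τs n) (hτs_stop n) (hτs_range n) (hτs_ge n)
        calc ∫ ω in A, α ω * ξ (τs n ω) ω ∂P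
            = ∫ ω in A, (P[fun ω' => α ω' * ξ (τs n ω') ω'|hS.measurableSpace]) ω ∂P :=
              (setIntegral_condExp hmS (hαξτ_int _ (hτs_stop n) (hτs_range n)) hA).symm
          _ ≤ ∫ ω in A, W ω ∂P :=
              integral_mono_ae (integrable_condExp.integrableOn) (hWint.integrableOn)
                (ae_restrict_of_ae this)
      -- convergence of ∫_A α E[ξ_{τs n}|𝓕_θ] to ∫_A α V θ
      have hconv : Tendsto (fun n => ∫ ω in A,
          α ω * (P[fun ω' => ξ (τs n ω') ω'|hθ.measurableSpace]) ω ∂P) atTop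
          (nhds (∫ ω in A, α ω * V θ ω ∂P)) := by
        refine tendsto_integral_of_dominated_convergence
          (fun ω => C * (P[M|hθ.measurableSpace]) ω)
          (fun n => ((hαE_int (τs n)).aestronglyMeasurable).restrict)
          ((integrable_condExp.const_mul C).integrableOn) ?_ ?_
        · intro n
          refine ae_restrict_of_ae ?_
          filter_upwards [habs n, hcondM_nonneg] with ω hω hω0
          rw [Real.norm_eq_abs, abs_mul, abs_of_nonneg (hα_nonneg ω)]
          calc α ω * |(P[fun ω' => ξ (τs n ω') ω'|hθ.measurableSpace]) ω|
              ≤ α ω * (P[M|hθ.measurableSpace]) ω :=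
                mul_le_mul_of_nonneg_left hω (hα_nonneg ω)
            _ ≤ C * (P[M|hθ.measurableSpace]) ω := by
                refine mul_le_mul_of_nonneg_right ?_ hω0
                have := hα_norm ω
                rwa [Real.norm_eq_abs, abs_of_nonneg (hα_nonneg ω)] at this
        · refine ae_restrict_of_ae ?_
          filter_upwards [htend] with ω hω
          exact hω.const_mul (α ω)
      exact le_of_tendsto hconv (Filter.Eventually.of_forall hstep)
    have hmain := condexp_le_condexp_of_forall_setIntegral_le hmS hαV_int hWint hsets
    simp only [hWce] at hmain
    exact hmain
end

section
/- Fix T > 0 and a filtered probability space (Ω, 𝓕, (𝓕_t)_{t∈[0,T]}, P). Let ξ, X : [0,T] × Ω → ℝ be processes. Suppose: R is a smallest supermartingale dominating ξ; R' is a smallest supermartingale dominating ξ + X; Q is a smallest supermartingale dominating R' − X; and the process R + X is a supermartingale. Then Q_t = R_t a.s. for every t ∈ [0,T]. -/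
/- STATEMENT 12 (Proposition 4.3, linear expectation): if R is a smallest
supermartingale dominating ξ, R' a smallest supermartingale dominating ξ + X,
Q a smallest supermartingale dominating R' − X, and R + X is a supermartingale,
then Q_t = R_t a.s. for every t ∈ [0,T]. -/

open MeasureTheory Filter

variable {Ω : Type*}

/-- A supermartingale on the time interval `[0,T]`: adapted, integrable, with
`E[f_t | 𝓕_s] ≤ f_s` a.s. for `s ≤ t` in `[0,T]`. -/
def IsSupermartingaleOn {m0 : MeasurableSpace Ω} (T : ℝ) (𝓕 : Filtration ℝ m0)
    (P : Measure Ω) (f : ℝ → Ω → ℝ) : Prop :=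
  (∀ t ∈ Set.Icc (0 : ℝ) T, StronglyMeasurable[𝓕 t] (f t)) ∧
  (∀ t ∈ Set.Icc (0 : ℝ) T, Integrable (f t) P) ∧
  (∀ s ∈ Set.Icc (0 : ℝ) T, ∀ t ∈ Set.Icc (0 : ℝ) T, s ≤ t →
    ∀ᵐ ω ∂P, (P[f t | 𝓕 s]) ω ≤ f s ω)

/-- `R` is a smallest supermartingale dominating the process `η` on `[0,T]`
(the Snell envelope of `η`). -/
def IsSmallestSupermartingaleDominating {m0 : MeasurableSpace Ω} (T : ℝ)
    (𝓕 : Filtration ℝ m0) (P : Measure Ω) (η R : ℝ → Ω → ℝ) : Prop :=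
  IsSupermartingaleOn T 𝓕 P R ∧
  (∀ t ∈ Set.Icc (0 : ℝ) T, ∀ᵐ ω ∂P, η t ω ≤ R t ω) ∧
  (∀ V : ℝ → Ω → ℝ, IsSupermartingaleOn T 𝓕 P V →
    (∀ t ∈ Set.Icc (0 : ℝ) T, ∀ᵐ ω ∂P, η t ω ≤ V t ω) →
    ∀ t ∈ Set.Icc (0 : ℝ) T, ∀ᵐ ω ∂P, R t ω ≤ V t ω)

theorem snell_envelope_shift_invariance
    {m0 : MeasurableSpace Ω} (T : ℝ) (hT : 0 < T) (𝓕 : Filtration ℝ m0)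
    (P : Measure Ω) [IsProbabilityMeasure P]
    (ξ X R R' Q : ℝ → Ω → ℝ)
    (hR : IsSmallestSupermartingaleDominating T 𝓕 P ξ R)
    (hR' : IsSmallestSupermartingaleDominating T 𝓕 P (fun t ω => ξ t ω + X t ω) R')
    (hQ : IsSmallestSupermartingaleDominating T 𝓕 P (fun t ω => R' t ω - X t ω) Q)
    (hRX : IsSupermartingaleOn T 𝓕 P (fun t ω => R t ω + X t ω)) :
    ∀ t ∈ Set.Icc (0 : ℝ) T, ∀ᵐ ω ∂P, Q t ω = R t ω := by
  -- Step 1: R' ≤ R + X, by minimality of R' (R + X is a supermartingale dominating ξ + X)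
  have h1 : ∀ t ∈ Set.Icc (0 : ℝ) T, ∀ᵐ ω ∂P, R' t ω ≤ R t ω + X t ω := by
    refine hR'.2.2 _ hRX ?_
    intro t ht
    filter_upwards [hR.2.1 t ht] with ω h
    linarith
  -- Step 2: Q ≤ R, by minimality of Q (R is a supermartingale dominating R' − X)
  have h2 : ∀ t ∈ Set.Icc (0 : ℝ) T, ∀ᵐ ω ∂P, Q t ω ≤ R t ω := by
    refine hQ.2.2 _ hR.1 ?_
    intro t ht
    filter_upwards [h1 t ht] with ω h
    linarith
  -- Step 3: R ≤ Q, by minimality of R (Q is a supermartingale dominating ξ)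
  have h3 : ∀ t ∈ Set.Icc (0 : ℝ) T, ∀ᵐ ω ∂P, R t ω ≤ Q t ω := by
    refine hR.2.2 _ hQ.1 ?_
    intro t ht
    filter_upwards [hR'.2.1 t ht, hQ.2.1 t ht] with ω ha hb
    linarith
  intro t ht
  filter_upwards [h2 t ht, h3 t ht] with ω ha hb
  linarith
end

section
/- Fix T > 0 and let μ be a finite Borel measure on (0,T]. Let ξ, ξ*, y : [0,T] → ℝ satisfy ξ(t) ≤ ξ*(t) ≤ y(t) for all t ∈ [0,T], with ξ* càdlàg and y having a left limit y(t−) at every t ∈ (0,T]. Then the functions t ↦ y(t−), t ↦ ξ*(t−) and t ↦ limsup_{u↑t} ξ(u) are Borel measurable on (0,T], and for every t ∈ (0,T], 0 ≤ y(t−) − ξ*(t−) ≤ y(t−) − limsup_{u↑t} ξ(u). Consequently, if ∫_{(0,T]} ( y(t−) − limsup_{u↑t} ξ(u) ) μ(dt) = 0, then ∫_{(0,T]} ( y(t−) − ξ*(t−) ) μ(dt) = 0. -/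
/- STATEMENT 14 (pathwise content of Theorem 5.1): if ξ ≤ ξ* ≤ y on [0,T] with ξ*
càdlàg and y having left limits, then t ↦ y(t−), t ↦ ξ*(t−) and
t ↦ limsup_{u↑t} ξ(u) are Borel measurable on (0,T],
0 ≤ y(t−) − ξ*(t−) ≤ y(t−) − limsup_{u↑t} ξ(u) for every t ∈ (0,T], and
∫_{(0,T]} (y(t−) − limsup_{u↑t} ξ(u)) μ(dt) = 0 implies
∫_{(0,T]} (y(t−) − ξ*(t−)) μ(dt) = 0 for a finite Borel measure μ. -/

open MeasureTheory Filter

/-- `f` is càdlàg on `[0,T]`: right-continuous at every `t ∈ [0,T)` and possessing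
left limits at every `t ∈ (0,T]`. -/
def CadlagOn (T : ℝ) (f : ℝ → ℝ) : Prop :=
  (∀ t ∈ Set.Ico (0 : ℝ) T, Tendsto f (nhdsWithin t (Set.Ioo t T)) (nhds (f t))) ∧
  (∀ t ∈ Set.Ioc (0 : ℝ) T, ∃ l : ℝ, Tendsto f (nhdsWithin t (Set.Iio t)) (nhds l))

/-- The canonical map `EReal → ℝ≥0∞` (sending `⊥` and nonpositive reals to `0`,
`⊤` to `⊤`). -/
noncomputable def erealToENNReal (x : EReal) : ENNReal :=
  if x = ⊤ then ⊤ else ENNReal.ofReal x.toReal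

/-- Auxiliary: a function of left limits is measurable on `(0,T]`. -/
lemma leftlim_measurable_aux (T : ℝ) (f fm : ℝ → ℝ)
    (h : ∀ t ∈ Set.Ioc (0 : ℝ) T, Tendsto f (nhdsWithin t (Set.Iio t)) (nhds (fm t))) :
    Measurable (fun t : Set.Ioc (0 : ℝ) T => fm t.1) := by
  set g : ℕ → ℝ → ℝ := fun n t => ((⌈(n + 1 : ℝ) * t⌉ : ℝ) - 1) / (n + 1) with hg
  have hmeas : ∀ n, Measurable (fun t : Set.Ioc (0 : ℝ) T => f (g n t.1)) := by
    intro n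
    have : (fun t : Set.Ioc (0 : ℝ) T => f (g n t.1)) =
        (fun k : ℤ => f (((k : ℝ) - 1) / (n + 1))) ∘
          (fun t : Set.Ioc (0 : ℝ) T => ⌈(n + 1 : ℝ) * t.1⌉) := rfl
    rw [this]
    exact (measurable_from_top).comp
      (Int.measurable_ceil.comp ((measurable_const.mul measurable_subtype_coe)))
  apply measurable_of_tendsto_metrizable hmeas
  rw [tendsto_pi_nhds]
  rintro ⟨t, ht⟩
  have hlt : ∀ n : ℕ, g n t < t := by
    intro n
    have hn : (0 : ℝ) < n + 1 := by positivity
    rw [hg, div_lt_iff₀ hn]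
    have := Int.ceil_lt_add_one ((n + 1 : ℝ) * t)
    linarith [this]
  have hge : ∀ n : ℕ, t - 1 / (n + 1) ≤ g n t := by
    intro n
    have hn : (0 : ℝ) < n + 1 := by positivity
    rw [hg, le_div_iff₀ hn]
    have := Int.le_ceil ((n + 1 : ℝ) * t)
    have h2 : (t - 1 / (n + 1)) * (n + 1) = (n + 1) * t - 1 := by field_simp
    rw [h2]
    linarith [this]
  have htend : Tendsto (fun n : ℕ => g n t) atTop (nhdsWithin t (Set.Iio t)) := by
    apply tendsto_nhdsWithin_of_tendsto_nhds_of_eventually_within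
    · have h1 : Tendsto (fun n : ℕ => t - 1 / ((n : ℝ) + 1)) atTop (nhds t) := by
        have := tendsto_one_div_add_atTop_nhds_zero_nat (𝕜 := ℝ)
        simpa using (tendsto_const_nhds (x := t)).sub this
      exact tendsto_of_tendsto_of_tendsto_of_le_of_le h1 tendsto_const_nhds hge
        (fun n => (hlt n).le)
    · exact Eventually.of_forall fun n => hlt n
  exact (h t ht).comp htend

/-- Auxiliary: the left limsup equals a countable inf of sups over rational
left endpoints. -/
lemma limsup_eq_rat_inf_aux (ξ : ℝ → ℝ) (t : ℝ) :
    limsup (fun u => (ξ u : EReal)) (nhdsWithin t (Set.Iio t)) =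
      ⨅ (q : ℚ) (_ : (q : ℝ) < t), ⨆ u ∈ Set.Ioo (q : ℝ) t, (ξ u : EReal) := by
  rw [(nhdsLT_basis t).limsup_eq_iInf_iSup]
  apply le_antisymm
  · exact le_iInf₂ fun q hq => iInf_le_of_le (q : ℝ) (iInf_le _ hq)
  · refine le_iInf₂ fun a ha => ?_
    obtain ⟨q, hq1, hq2⟩ := exists_rat_btwn ha
    refine (iInf_le_of_le q (iInf_le _ hq2)).trans ?_
    exact iSup₂_le fun u hu => le_iSup₂_of_le u ⟨hq1.trans hu.1, hu.2⟩ le_rfl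

/-- Auxiliary: measurability of the left limsup function. -/
lemma limsup_meas_aux (ξ : ℝ → ℝ) (T : ℝ) :
    Measurable (fun t : Set.Ioc (0 : ℝ) T =>
      limsup (fun u => (ξ u : EReal)) (nhdsWithin t.1 (Set.Iio t.1))) := by
  have key : Measurable (fun t : ℝ =>
      ⨅ (q : ℚ) (_ : (q : ℝ) < t), ⨆ u ∈ Set.Ioo (q : ℝ) t, (ξ u : EReal)) := by
    apply Measurable.iInf
    intro q
    have hS : Measurable (fun t : ℝ => ⨆ u ∈ Set.Ioo (q : ℝ) t, (ξ u : EReal)) := by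
      apply Monotone.measurable
      intro s t hst
      exact iSup₂_le fun u hu => le_iSup₂_of_le u ⟨hu.1, hu.2.trans_le hst⟩ le_rfl
    have : (fun t : ℝ => ⨅ (_ : (q : ℝ) < t), ⨆ u ∈ Set.Ioo (q : ℝ) t, (ξ u : EReal)) =
        fun t : ℝ => if (q : ℝ) < t then ⨆ u ∈ Set.Ioo (q : ℝ) t, (ξ u : EReal) else ⊤ := by
      funext t
      by_cases h : (q : ℝ) < t
      · simp [h]
      · simp [h]
    rw [this]
    exact Measurable.ite measurableSet_Ioi hS measurable_const
  have : (fun t : Set.Ioc (0 : ℝ) T =>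
      limsup (fun u => (ξ u : EReal)) (nhdsWithin t.1 (Set.Iio t.1))) =
      (fun t : ℝ => ⨅ (q : ℚ) (_ : (q : ℝ) < t), ⨆ u ∈ Set.Ioo (q : ℝ) t, (ξ u : EReal)) ∘
        Subtype.val := by
    funext t; exact limsup_eq_rat_inf_aux ξ t.1
  rw [this]
  exact key.comp measurable_subtype_coe

/-- Auxiliary: `erealToENNReal` is monotone. -/
lemma erealToENNReal_mono_aux {x y : EReal} (h : x ≤ y) :
    erealToENNReal x ≤ erealToENNReal y := by
  unfold erealToENNReal
  by_cases hy : y = ⊤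
  · simp [hy]
  · have hx : x ≠ ⊤ := fun hx => hy (top_le_iff.1 (hx ▸ h))
    rw [if_neg hx, if_neg hy]
    by_cases hxb : x = ⊥
    · simp [hxb]
    · exact ENNReal.ofReal_le_ofReal (EReal.toReal_le_toReal h hxb hy)

/-- Auxiliary: `erealToENNReal` on real coercions. -/
lemma erealToENNReal_coe_aux (a : ℝ) :
    erealToENNReal (a : EReal) = ENNReal.ofReal a := by
  simp [erealToENNReal, EReal.coe_ne_top]

theorem generalized_skorokhod_condition
    (T : ℝ) (hT : 0 < T) (μ : Measure ℝ) [IsFiniteMeasure μ]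
    (ξ ξs y : ℝ → ℝ)
    (hord₁ : ∀ t ∈ Set.Icc (0 : ℝ) T, ξ t ≤ ξs t)
    (hord₂ : ∀ t ∈ Set.Icc (0 : ℝ) T, ξs t ≤ y t)
    (hξs_cadlag : CadlagOn T ξs)
    (ym ξsm : ℝ → ℝ)
    (hym : ∀ t ∈ Set.Ioc (0 : ℝ) T, Tendsto y (nhdsWithin t (Set.Iio t)) (nhds (ym t)))
    (hξsm : ∀ t ∈ Set.Ioc (0 : ℝ) T,
      Tendsto ξs (nhdsWithin t (Set.Iio t)) (nhds (ξsm t))) :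
    Measurable (fun t : Set.Ioc (0 : ℝ) T => ym t.1) ∧
    Measurable (fun t : Set.Ioc (0 : ℝ) T => ξsm t.1) ∧
    Measurable (fun t : Set.Ioc (0 : ℝ) T =>
      limsup (fun u => (ξ u : EReal)) (nhdsWithin t.1 (Set.Iio t.1))) ∧
    (∀ t ∈ Set.Ioc (0 : ℝ) T,
      0 ≤ ym t - ξsm t ∧
      ((ym t : EReal) - (ξsm t : EReal)) ≤
        (ym t : EReal) - limsup (fun u => (ξ u : EReal)) (nhdsWithin t (Set.Iio t))) ∧
    ((∫⁻ t in Set.Ioc (0 : ℝ) T,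
        erealToENNReal ((ym t : EReal)
          - limsup (fun u => (ξ u : EReal)) (nhdsWithin t (Set.Iio t))) ∂μ = 0) →
      ∫⁻ t in Set.Ioc (0 : ℝ) T, ENNReal.ofReal (ym t - ξsm t) ∂μ = 0) := by
  -- pointwise facts
  have hpt : ∀ t ∈ Set.Ioc (0 : ℝ) T,
      0 ≤ ym t - ξsm t ∧
      ((ym t : EReal) - (ξsm t : EReal)) ≤
        (ym t : EReal) - limsup (fun u => (ξ u : EReal)) (nhdsWithin t (Set.Iio t)) := by
    intro t ht
    have hIoo : Set.Ioo (0 : ℝ) t ∈ nhdsWithin t (Set.Iio t) := by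
      apply mem_nhdsWithin.2
      exact ⟨Set.Ioi 0, isOpen_Ioi, ht.1, fun u hu => ⟨hu.1, hu.2⟩⟩
    have hsub : ∀ u ∈ Set.Ioo (0 : ℝ) t, u ∈ Set.Icc (0 : ℝ) T :=
      fun u hu => ⟨hu.1.le, hu.2.le.trans ht.2⟩
    have h1 : ξsm t ≤ ym t := by
      refine le_of_tendsto_of_tendsto (hξsm t ht) (hym t ht) ?_
      filter_upwards [hIoo] with u hu
      exact hord₂ u (hsub u hu)
    have h2 : limsup (fun u => (ξ u : EReal)) (nhdsWithin t (Set.Iio t)) ≤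
        (ξsm t : EReal) := by
      have htend : Tendsto (fun u => (ξs u : EReal)) (nhdsWithin t (Set.Iio t))
          (nhds ((ξsm t : ℝ) : EReal)) :=
        (continuous_coe_real_ereal.tendsto _).comp (hξsm t ht)
      have hle : limsup (fun u => (ξ u : EReal)) (nhdsWithin t (Set.Iio t)) ≤
          limsup (fun u => (ξs u : EReal)) (nhdsWithin t (Set.Iio t)) := by
        apply limsup_le_limsup ?_ (by isBoundedDefault) (by isBoundedDefault)
        filter_upwards [hIoo] with u hu
        exact EReal.coe_le_coe_iff.2 (hord₁ u (hsub u hu))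
      rw [htend.limsup_eq] at hle
      exact hle
    exact ⟨by linarith, EReal.sub_le_sub le_rfl h2⟩
  refine ⟨leftlim_measurable_aux T y ym hym, leftlim_measurable_aux T ξs ξsm hξsm,
    limsup_meas_aux ξ T, hpt, ?_⟩
  intro h0
  have hle : ∀ᵐ t ∂μ.restrict (Set.Ioc (0 : ℝ) T),
      ENNReal.ofReal (ym t - ξsm t) ≤
        erealToENNReal ((ym t : EReal)
          - limsup (fun u => (ξ u : EReal)) (nhdsWithin t (Set.Iio t))) := by
    apply ae_restrict_of_forall_mem measurableSet_Ioc
    intro t ht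
    obtain ⟨-, h2⟩ := hpt t ht
    calc ENNReal.ofReal (ym t - ξsm t)
        = erealToENNReal ((ym t - ξsm t : ℝ) : EReal) := (erealToENNReal_coe_aux _).symm
      _ = erealToENNReal ((ym t : EReal) - (ξsm t : EReal)) := by rw [EReal.coe_sub]
      _ ≤ _ := erealToENNReal_mono_aux h2
  exact le_antisymm ((lintegral_mono_ae hle).trans h0.le) zero_le
end

section
/- Let ξ and ξ^1, ξ^2, … be reward processes with value families (V(S))_{S∈𝓣_0} and (V^n(S))_{S∈𝓣_0}. Assume P-a.s. that ξ^{n+1}_t ≤ ξ^n_t and ξ_t ≤ ξ^n_t for all t ∈ [0,T] and all n, and that there exist nonnegative integrable random variables M_n with P-a.s. |ξ^n_t − ξ_t| ≤ M_n for all t ∈ [0,T] and E[M_n] → 0 as n → ∞. Then for every stopping time S ∈ 𝓣_0, the sequence (V^n(S))_{n∈ℕ} is a.s. nonincreasing, V^n(S) ≥ V(S) a.s. for every n, and V^n(S) converges to V(S) both a.s. and in L¹(P) as n → ∞. -/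
/- STATEMENT 15 (monotone-approximation content of Theorem 3.1): if reward processes
ξ^n decrease to ξ (with ξ ≤ ξ^n ≤ ξ^{n-1} a.s.) and |ξ^n_t − ξ_t| ≤ M_n with
E[M_n] → 0, then the value families satisfy: (V^n(S)) is a.s. nonincreasing,
V^n(S) ≥ V(S) a.s., and V^n(S) → V(S) a.s. and in L¹(P), for every stopping time S. -/

open MeasureTheory Filter

open MeasureTheory Filter

variable {Ω : Type*}

theorem value_family_monotone_approximation
    {m0 : MeasurableSpace Ω} (𝓕 : Filtration ℝ m0) (P : Measure Ω)
    [IsProbabilityMeasure P] (T : ℝ) (hT : 0 < T)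
    (ξ : ℝ → Ω → ℝ) (ξn : ℕ → ℝ → Ω → ℝ)
    (V : (Ω → ℝ) → Ω → ℝ) (Vn : ℕ → (Ω → ℝ) → Ω → ℝ)
    (hξ : IsRewardProcess 𝓕 P T ξ) (hξn : ∀ n, IsRewardProcess 𝓕 P T (ξn n))
    (hV : IsValueFamily 𝓕 P T ξ V) (hVn : ∀ n, IsValueFamily 𝓕 P T (ξn n) (Vn n))
    (hdecr : ∀ n, ∀ᵐ ω ∂P, ∀ t ∈ Set.Icc (0 : ℝ) T, ξn (n + 1) t ω ≤ ξn n t ω)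
    (hdom : ∀ n, ∀ᵐ ω ∂P, ∀ t ∈ Set.Icc (0 : ℝ) T, ξ t ω ≤ ξn n t ω)
    (M : ℕ → Ω → ℝ) (hM_nonneg : ∀ n ω, 0 ≤ M n ω) (hM_int : ∀ n, Integrable (M n) P)
    (hbound : ∀ n, ∀ᵐ ω ∂P, ∀ t ∈ Set.Icc (0 : ℝ) T, |ξn n t ω - ξ t ω| ≤ M n ω)
    (hM_to_zero : Tendsto (fun n => ∫ ω, M n ω ∂P) atTop (nhds 0)) :
    ∀ S : Ω → ℝ, IsStoppingTime 𝓕 (fun ω => (S ω : WithTop ℝ)) → (∀ ω, S ω ∈ Set.Icc 0 T) →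
      (∀ᵐ ω ∂P, Antitone fun n => Vn n S ω) ∧
      (∀ n, ∀ᵐ ω ∂P, V S ω ≤ Vn n S ω) ∧
      (∀ᵐ ω ∂P, Tendsto (fun n => Vn n S ω) atTop (nhds (V S ω))) ∧
      Tendsto (fun n => ∫ ω, |Vn n S ω - V S ω| ∂P) atTop (nhds 0) := by
  intro S hS hSmem
  have hm : hS.measurableSpace ≤ m0 := hS.measurableSpace_le
  obtain ⟨hVmeas, hVint, hVdom, hVmin⟩ := hV S hS hSmem
  have hVnprops := fun n => hVn n S hS hSmem
  have hSrefl : ∀ᵐ ω ∂P, S ω ≤ S ω := Filter.Eventually.of_forall fun _ => le_rfl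
  -- (1) a.e. monotonicity step
  have hmono : ∀ n, ∀ᵐ ω ∂P, Vn (n + 1) S ω ≤ Vn n S ω := by
    intro n
    obtain ⟨hmeas, hint, hdomV, -⟩ := hVnprops n
    obtain ⟨-, -, -, hmin⟩ := hVnprops (n + 1)
    refine hmin (Vn n S) hmeas hint ?_
    intro τ hτ hτmem hSτ
    have h1 : (fun ω => ξn (n + 1) (τ ω) ω) ≤ᵐ[P] fun ω => ξn n (τ ω) ω := by
      filter_upwards [hdecr n] with ω h using h (τ ω) (hτmem ω)
    have h2 := condExp_mono (m := hS.measurableSpace) (μ := P)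
      ((hξn (n + 1)).2 τ hτ hτmem) ((hξn n).2 τ hτ hτmem) h1
    filter_upwards [h2, hdomV τ hτ hτmem hSτ] with ω ha hb using ha.trans hb
  -- (2) V ≤ Vn a.e.
  have hVle : ∀ n, ∀ᵐ ω ∂P, V S ω ≤ Vn n S ω := by
    intro n
    obtain ⟨hmeas, hint, hdomV, -⟩ := hVnprops n
    refine hVmin (Vn n S) hmeas hint ?_
    intro τ hτ hτmem hSτ
    have h1 : (fun ω => ξ (τ ω) ω) ≤ᵐ[P] fun ω => ξn n (τ ω) ω := by
      filter_upwards [hdom n] with ω h using h (τ ω) (hτmem ω)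
    have h2 := condExp_mono (m := hS.measurableSpace) (μ := P)
      (hξ.2 τ hτ hτmem) ((hξn n).2 τ hτ hτmem) h1
    filter_upwards [h2, hdomV τ hτ hτmem hSτ] with ω ha hb using ha.trans hb
  -- (3) upper bound: Vn ≤ V + E[M n | 𝓕_S] a.e.
  have hub : ∀ n, ∀ᵐ ω ∂P,
      Vn n S ω ≤ V S ω + (P[M n | hS.measurableSpace]) ω := by
    intro n
    obtain ⟨-, -, -, hmin⟩ := hVnprops n
    refine hmin (fun ω => V S ω + (P[M n | hS.measurableSpace]) ω)
      (hVmeas.add (stronglyMeasurable_condExp.measurable)) (hVint.add integrable_condExp) ?_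
    intro τ hτ hτmem hSτ
    have h1 : (fun ω => ξn n (τ ω) ω) ≤ᵐ[P] fun ω => ξ (τ ω) ω + M n ω := by
      filter_upwards [hbound n] with ω h
      have := h (τ ω) (hτmem ω)
      linarith [abs_le.1 this |>.2]
    have hint1 := (hξ.2 τ hτ hτmem).add (hM_int n)
    have h2 := condExp_mono (m := hS.measurableSpace) (μ := P)
      ((hξn n).2 τ hτ hτmem) hint1 h1
    have h3 := condExp_add (m := hS.measurableSpace) (μ := P)
      (hξ.2 τ hτ hτmem) (hM_int n)
    filter_upwards [h2, h3, hVdom τ hτ hτmem hSτ] with ω ha hb hc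
    calc (P[fun ω' => ξn n (τ ω') ω' | hS.measurableSpace]) ω
        ≤ (P[(fun ω' => ξ (τ ω') ω') + M n | hS.measurableSpace]) ω := ha
      _ = (P[fun ω' => ξ (τ ω') ω' | hS.measurableSpace]) ω
          + (P[M n | hS.measurableSpace]) ω := hb
      _ ≤ V S ω + (P[M n | hS.measurableSpace]) ω := by linarith
  -- combine countable families
  have hmono_ae : ∀ᵐ ω ∂P, Antitone fun n => Vn n S ω := by
    have := ae_all_iff.2 hmono
    filter_upwards [this] with ω h
    exact antitone_nat_of_succ_le fun n => h n
  refine ⟨hmono_ae, hVle, ?_, ?_⟩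
  · -- a.e. convergence
    -- D n := Vn n S - V S, L := ⨅ n, D n
    set D : ℕ → Ω → ℝ := fun n ω => Vn n S ω - V S ω with hD
    set L : Ω → ℝ := fun ω => ⨅ n, D n ω with hL
    have hDmeas : ∀ n, Measurable (D n) :=
      fun n => (((hVnprops n).1.mono hm le_rfl).sub (hVmeas.mono hm le_rfl))
    have hLmeas : Measurable L := Measurable.iInf fun n => hDmeas n
    have hDint : ∀ n, Integrable (D n) P :=
      fun n => ((hVnprops n).2.1).sub hVint
    have hD0 : ∀ n, ∀ᵐ ω ∂P, 0 ≤ D n ω := by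
      intro n; filter_upwards [hVle n] with ω h using sub_nonneg.2 h
    have hae : ∀ᵐ ω ∂P, (∀ n, 0 ≤ D n ω) ∧ Antitone (fun n => D n ω) := by
      filter_upwards [ae_all_iff.2 hD0, hmono_ae] with ω h1 h2
      exact ⟨h1, fun a b hab => sub_le_sub_right (h2 hab) _⟩
    have hLnonneg : ∀ᵐ ω ∂P, 0 ≤ L ω := by
      filter_upwards [hae] with ω ⟨h1, _⟩
      exact le_ciInf h1
    have hLleD : ∀ n, ∀ᵐ ω ∂P, L ω ≤ D n ω := by
      intro n
      filter_upwards [hae] with ω ⟨h1, _⟩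
      exact ciInf_le ⟨0, fun x ⟨k, hk⟩ => hk ▸ h1 k⟩ n
    have hLint : Integrable L P := by
      refine Integrable.mono (hDint 0) hLmeas.aestronglyMeasurable ?_
      filter_upwards [hLnonneg, hLleD 0, hD0 0] with ω h1 h2 h3
      rw [Real.norm_eq_abs, Real.norm_eq_abs, abs_of_nonneg h1, abs_of_nonneg h3]
      exact h2
    -- D n ≤ E[M n | 𝓕_S] a.e., so ∫ L ≤ ∫ M n → 0
    have hintL : ∀ n, ∫ ω, L ω ∂P ≤ ∫ ω, M n ω ∂P := by
      intro n
      have h1 : ∫ ω, L ω ∂P ≤ ∫ ω, (P[M n | hS.measurableSpace]) ω ∂P := by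
        refine integral_mono_ae hLint integrable_condExp ?_
        filter_upwards [hLleD n, hub n] with ω ha hb
        have : D n ω ≤ (P[M n | hS.measurableSpace]) ω := by
          simp only [hD]; linarith
        exact ha.trans this
      rwa [integral_condExp hm] at h1
    have hintL0 : ∫ ω, L ω ∂P ≤ 0 :=
      ge_of_tendsto' hM_to_zero hintL
    have hintLnn : 0 ≤ ∫ ω, L ω ∂P := integral_nonneg_of_ae hLnonneg
    have hL0 : ∀ᵐ ω ∂P, L ω = 0 := by
      have : ∫ ω, L ω ∂P = 0 := le_antisymm hintL0 hintLnn
      have h := (integral_eq_zero_iff_of_nonneg_ae hLnonneg hLint).1 this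
      filter_upwards [h.le, hLnonneg] with ω h1 h2
      exact le_antisymm h1 h2
    filter_upwards [hae, hL0] with ω ⟨h1, h2⟩ h3
    have hbdd : BddBelow (Set.range fun n => D n ω) := ⟨0, fun x ⟨k, hk⟩ => hk ▸ h1 k⟩
    have htend : Tendsto (fun n => D n ω) atTop (nhds (L ω)) :=
      tendsto_atTop_ciInf h2 hbdd
    rw [h3] at htend
    have := htend.add_const (V S ω)
    simpa [hD] using this
  · -- L¹ convergence
    have hbnd : ∀ n, ∫ ω, |Vn n S ω - V S ω| ∂P ≤ ∫ ω, M n ω ∂P := by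
      intro n
      have h1 : ∫ ω, |Vn n S ω - V S ω| ∂P
          ≤ ∫ ω, (P[M n | hS.measurableSpace]) ω ∂P := by
        refine integral_mono_ae ((((hVnprops n).2.1).sub hVint).abs) integrable_condExp ?_
        filter_upwards [hVle n, hub n] with ω ha hb
        rw [abs_of_nonneg (sub_nonneg.2 ha)]
        linarith
      rwa [integral_condExp hm] at h1
    refine squeeze_zero (fun n => integral_nonneg fun ω => abs_nonneg _) hbnd hM_to_zero
end
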